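/- For a finite group G and n ≥ 1, the number c_G(n) of orbits of G acting by simultaneous conjugation on the set G^(n) of pairwise-commuting n-tuples satisfies the recursion c_G(n) = Σᵢ c_{Z_G(gᵢ)}(n-1), where the sum runs over representatives g₁,…,g_k of the conjugacy classes of G, with the convention c_H(0) = 1 for any group H. -/
import Mathlib


/-- The equivalence relation of simultaneous conjugacy on pairwise-commuting `n`-tuples. -/
def simSetoid (G : Type*) [Group G] (n : ℕ) :
    Setoid {v : Fin n → G // ∀ i j, Commute (v i) (v j)} where
  r v w := ∃ x : G, ∀ i, x * v.1 i * x⁻¹ = w.1 i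
  iseqv := by
    constructor
    · intro v; exact ⟨1, fun i => by group⟩
    · rintro v w ⟨x, h⟩; exact ⟨x⁻¹, fun i => by rw [← h i]; group⟩
    · rintro u v w ⟨x, h⟩ ⟨y, h'⟩; exact ⟨y * x, fun i => by rw [← h' i, ← h i]; group⟩

/-- `cc G n` : the number of simultaneous conjugacy classes of pairwise-commuting
`n`-tuples of elements of `G`. -/
noncomputable def cc (G : Type*) [Group G] (n : ℕ) : ℕ :=
  Nat.card (Quotient (simSetoid G n))

section Aux

/-- Commuting tuples. -/
abbrev CT (G : Type*) [Group G] (n : ℕ) := {v : Fin n → G // ∀ i j, Commute (v i) (v j)}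

variable {G : Type*} [Group G] {m k : ℕ}

lemma commute_conj {a b : G} (x : G) (h : Commute a b) :
    Commute (x * a * x⁻¹) (x * b * x⁻¹) := by
  simpa using h.map (MulAut.conj x).toMonoidHom

variable (g : Fin k → G)

/-- The tail of a commuting `(m+1)`-tuple, conjugated into the centralizer of `g i`. -/
def tTail (i : Fin k) (x : G) (v : CT G (m + 1)) (hx : x * v.1 0 * x⁻¹ = g i) :
    CT (Subgroup.centralizer {g i}) m :=
  ⟨fun j => ⟨x * v.1 j.succ * x⁻¹, by
      rw [Subgroup.mem_centralizer_singleton_iff, ← hx]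
      exact (commute_conj x (v.2 j.succ 0)).eq⟩,
   fun a b => by
      rw [Commute, SemiconjBy, Subtype.ext_iff]
      push_cast
      exact (commute_conj x (v.2 a.succ b.succ)).eq⟩

variable (hg : Function.Bijective (fun i => ConjClasses.mk (g i) : Fin k → ConjClasses G))

/-- The index of the conjugacy-class representative of `a`. -/
noncomputable def idx (a : G) : Fin k :=
  (Equiv.ofBijective _ hg).symm (ConjClasses.mk a)

lemma isConj_idx (a : G) : IsConj (g (idx g hg a)) a :=
  ConjClasses.mk_eq_mk_iff_isConj.mp ((Equiv.ofBijective _ hg).apply_symm_apply (ConjClasses.mk a))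

/-- An element conjugating `a` to its representative. -/
noncomputable def conjEl (a : G) : G :=
  (Classical.choose (isConj_iff.mp (isConj_idx g hg a)))⁻¹

lemma conjEl_spec (a : G) : conjEl g hg a * a * (conjEl g hg a)⁻¹ = g (idx g hg a) := by
  have h := Classical.choose_spec (isConj_iff.mp (isConj_idx g hg a))
  rw [conjEl]
  set c := Classical.choose (isConj_iff.mp (isConj_idx g hg a)) with hc
  set b := g (idx g hg a) with hb
  rw [← h]; group

/-- The forward map on representatives. -/
noncomputable def fwd (v : CT G (m + 1)) :
    Σ i : Fin k, Quotient (simSetoid (Subgroup.centralizer {g i}) m) :=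
  ⟨idx g hg (v.1 0),
    Quotient.mk _ (tTail g (idx g hg (v.1 0)) (conjEl g hg (v.1 0)) v (conjEl_spec g hg (v.1 0)))⟩

lemma fwd_eq (v : CT G (m + 1)) (i : Fin k) (x : G) (hx : x * v.1 0 * x⁻¹ = g i) :
    fwd g hg v = ⟨i, Quotient.mk _ (tTail g i x v hx)⟩ := by
  have hmk : ConjClasses.mk (g i) = ConjClasses.mk (v.1 0) :=
    ConjClasses.mk_eq_mk_iff_isConj.mpr (isConj_iff.mpr ⟨x⁻¹, by rw [← hx]; group⟩)
  have hi : idx g hg (v.1 0) = i := by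
    rw [idx, ← hmk]
    exact (Equiv.ofBijective _ hg).symm_apply_apply i
  subst hi
  rw [fwd]
  congr 1
  apply Quotient.sound
  have h1 := conjEl_spec g hg (v.1 0)
  refine ⟨⟨x * (conjEl g hg (v.1 0))⁻¹, ?_⟩, fun j => ?_⟩
  · rw [Subgroup.mem_centralizer_singleton_iff]
    conv_lhs => rw [← h1]
    conv_rhs => rw [← hx]
    group
  · rw [Subtype.ext_iff]
    push_cast
    show (x * (conjEl g hg (v.1 0))⁻¹) * ((conjEl g hg (v.1 0)) * v.1 j.succ *
      (conjEl g hg (v.1 0))⁻¹) * (x * (conjEl g hg (v.1 0))⁻¹)⁻¹ = x * v.1 j.succ * x⁻¹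
    group

lemma fwd_wd (v w : CT G (m + 1)) (h : (simSetoid G (m + 1)).r v w) :
    fwd g hg v = fwd g hg w := by
  obtain ⟨y, hy⟩ := h
  set i := idx g hg (w.1 0) with hi
  set x := conjEl g hg (w.1 0) with hxdef
  have hx : (x * y) * v.1 0 * (x * y)⁻¹ = g i := by
    rw [mul_inv_rev, hi, hxdef, ← conjEl_spec g hg (w.1 0)]
    rw [← hy 0]; group
  rw [fwd_eq g hg v i (x * y) hx, fwd_eq g hg w i x (conjEl_spec g hg (w.1 0))]
  congr 1
  apply congrArg
  refine Subtype.ext (funext fun j => Subtype.ext ?_)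
  show (x * y) * v.1 j.succ * (x * y)⁻¹ = x * w.1 j.succ * x⁻¹
  rw [← hy j.succ]; group

/-- The backward map on representatives. -/
def bwd (i : Fin k) (w : CT (Subgroup.centralizer {g i}) m) : CT G (m + 1) :=
  ⟨Fin.cons (g i) (fun j => (w.1 j : G)), by
    intro a b
    induction a using Fin.cases with
    | zero =>
      induction b using Fin.cases with
      | zero => simp
      | succ b =>
        simp only [Fin.cons_zero, Fin.cons_succ]
        exact (Subgroup.mem_centralizer_singleton_iff.mp (w.1 b).2).symm
    | succ a =>
      induction b using Fin.cases with
      | zero =>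
        simp only [Fin.cons_zero, Fin.cons_succ]
        exact Subgroup.mem_centralizer_singleton_iff.mp (w.1 a).2
      | succ b =>
        simp only [Fin.cons_succ]
        have := congrArg Subtype.val (w.2 a b)
        push_cast at this
        exact this⟩

noncomputable def Fmap : Quotient (simSetoid G (m + 1)) →
    Σ i : Fin k, Quotient (simSetoid (Subgroup.centralizer {g i}) m) :=
  Quotient.lift (fwd g hg) (fun v w h => fwd_wd g hg v w h)

noncomputable def Bmap (s : Σ i : Fin k, Quotient (simSetoid (Subgroup.centralizer {g i}) m)) :
    Quotient (simSetoid G (m + 1)) :=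
  Quotient.lift (fun w => Quotient.mk _ (bwd g s.1 w)) (fun w w' h => by
    apply Quotient.sound
    obtain ⟨z, hz⟩ := h
    refine ⟨(z : G), fun j => ?_⟩
    induction j using Fin.cases with
    | zero =>
      show (z : G) * (g s.1) * (z : G)⁻¹ = g s.1
      have := Subgroup.mem_centralizer_singleton_iff.mp z.2
      rw [this]; group
    | succ j =>
      show (z : G) * (w.1 j : G) * (z : G)⁻¹ = (w'.1 j : G)
      have := congrArg Subtype.val (hz j)
      push_cast at this
      exact this) s.2

lemma Bmap_Fmap (q : Quotient (simSetoid G (m + 1))) : Bmap g (Fmap g hg q) = q := by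
  induction q using Quotient.ind with
  | _ v =>
    set i := idx g hg (v.1 0) with hi
    set x := conjEl g hg (v.1 0) with hx
    have hxs : x * v.1 0 * x⁻¹ = g i := conjEl_spec g hg (v.1 0)
    apply Quotient.sound
    refine ⟨x⁻¹, fun j => ?_⟩
    induction j using Fin.cases with
    | zero =>
      show x⁻¹ * (g i) * x⁻¹⁻¹ = v.1 0
      rw [← hxs]; group
    | succ j =>
      show x⁻¹ * (x * v.1 j.succ * x⁻¹) * x⁻¹⁻¹ = v.1 j.succ
      group

lemma Fmap_Bmap (s : Σ i : Fin k, Quotient (simSetoid (Subgroup.centralizer {g i}) m)) :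
    Fmap g hg (Bmap g s) = s := by
  obtain ⟨i, q⟩ := s
  induction q using Quotient.ind with
  | _ w =>
    have hx : (1 : G) * (bwd g i w).1 0 * (1 : G)⁻¹ = g i := by
      simp [bwd]
    show fwd g hg (bwd g i w) = _
    rw [fwd_eq g hg (bwd g i w) i 1 hx]
    congr 1
    apply congrArg
    refine Subtype.ext (funext fun j => Subtype.ext ?_)
    show (1 : G) * (bwd g i w).1 j.succ * (1 : G)⁻¹ = (w.1 j : G)
    simp [bwd]

noncomputable def keyEquiv : Quotient (simSetoid G (m + 1)) ≃
    Σ i : Fin k, Quotient (simSetoid (Subgroup.centralizer {g i}) m) :=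
  ⟨Fmap g hg, Bmap g, Bmap_Fmap g hg, Fmap_Bmap g hg⟩

lemma natCard_sigma {ι : Type*} [Fintype ι] (f : ι → Type*) [∀ i, Finite (f i)] :
    Nat.card ((i : ι) × f i) = ∑ i, Nat.card (f i) := by
  classical
  letI : ∀ i, Fintype (f i) := fun i => Fintype.ofFinite _
  simp [Nat.card_eq_fintype_card, Fintype.card_sigma]

end Aux

theorem cc_recursion (G : Type*) [Group G] [Fintype G] (n : ℕ) (hn : 1 ≤ n)
    (k : ℕ) (g : Fin k → G)
    (hg : Function.Bijective (fun i => ConjClasses.mk (g i) : Fin k → ConjClasses G)) :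
    cc G n = ∑ i : Fin k, cc (Subgroup.centralizer {g i}) (n - 1) := by
  obtain ⟨m, rfl⟩ : ∃ m, n = m + 1 := ⟨n - 1, by omega⟩
  simp only [Nat.add_sub_cancel]
  rw [cc, Nat.card_congr (keyEquiv g hg)]
  rw [natCard_sigma]
  rfl
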